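/- arXiv:1312.2230 — 2 statements merged into one kernel-verified Lean document; each statement's English description precedes it below -/
import Mathlib

section
/- Let p, q be integers with 0 ≤ q < p and gcd(p,q) = 1. Let g : ℝ³ → ℝ³ be the rotation by angle 2πq/p about the x₃-axis and f : ℝ³ → ℝ³ the reflection (x₁,x₂,x₃) ↦ (x₁,x₂,−x₃). Let ∼ be the equivalence relation on the unit sphere S² = {x ∈ ℝ³ : ‖x‖ = 1} generated by the pairs x ∼ f(g(x)) for all x ∈ S² with x₃ ≥ 0. Then for every point x of the equator (i.e. x ∈ S² with x₃ = 0), the equivalence class of x equals the rotation orbit {g^k(x) : k ∈ ℤ} and contains exactly p points. -/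
/-!
A generating pair `x ∼ f(g(x))` changes the sign of `x₃`, so it touches the equator only if both
of its points lie on it, and on the equator `f ∘ g = g`. The equivalence class of an equatorial
point is therefore its `g`-orbit. In the first coordinate `g` is multiplication by
`exp(2πiq/p)`, a primitive `p`-th root of unity because `gcd(p, q) = 1`, so the orbit has `p`
points.
-/

/-- The rotation of `ℝ³ = ℂ × ℝ` by angle `θ` about the `x₃`-axis. -/
noncomputable def rotZ (θ : ℝ) : Equiv.Perm (ℂ × ℝ) :=
  (Equiv.mulLeft₀ (Complex.exp (θ * Complex.I)) (Complex.exp_ne_zero _)).prodCongr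
    (Equiv.refl ℝ)

/-- The reflection `(x₁,x₂,x₃) ↦ (x₁,x₂,-x₃)` of `ℝ³ = ℂ × ℝ`. -/
def reflZ : ℂ × ℝ → ℂ × ℝ := fun x => (x.1, -x.2)

/-- The generating relation on the unit sphere: `x ∼ f(g(x))` for `x` in the
closed upper hemisphere, where `g` is the rotation by `2πq/p` and `f` is the
reflection in the equatorial plane. -/
def lensRel (p q : ℤ) : ℂ × ℝ → ℂ × ℝ → Prop := fun x y =>
  ‖x.1‖ ^ 2 + x.2 ^ 2 = 1 ∧ 0 ≤ x.2 ∧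
    y = reflZ (rotZ (2 * Real.pi * (q : ℝ) / (p : ℝ)) x)

namespace Relation

variable {α : Type*} {r : α → α → Prop}

theorem EqvGen.mem_iff_mem {s : Set α} (hs : ∀ a b, r a b → (a ∈ s ↔ b ∈ s)) {a b : α}
    (h : EqvGen r a b) : a ∈ s ↔ b ∈ s := by
  induction h with
  | rel a b hab => exact hs a b hab
  | refl => rfl
  | symm _ _ _ ih => exact ih.symm
  | trans _ _ _ _ _ ih₁ ih₂ => exact ih₁.trans ih₂

theorem eqvGen_of_rel_succ {f : ℤ → α} (h : ∀ k, r (f k) (f (k + 1))) (m n : ℤ) :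
    EqvGen r (f m) (f n) := by
  have hchain : ReflTransGen (fun i j => EqvGen r (f i) (f j)) m n :=
    reflTransGen_of_succ _ (fun i _ => .rel _ _ (h i)) (fun i _ => .symm _ _ (.rel _ _ (h i)))
  induction hchain with
  | refl => exact .refl _
  | tail _ hstep ih => exact .trans _ _ _ ih hstep

end Relation

theorem Equiv.Perm.exists_apply_eq_zpow_apply_iff {α : Type*} (σ : Equiv.Perm α) (x a : α) :
    (∃ k : ℤ, σ a = (σ ^ k) x) ↔ ∃ k : ℤ, a = (σ ^ k) x := by
  constructor
  · rintro ⟨k, hk⟩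
    refine ⟨k - 1, σ.injective ?_⟩
    rw [hk, ← Equiv.Perm.mul_apply, mul_self_zpow, sub_add_cancel]
  · rintro ⟨k, rfl⟩
    exact ⟨k + 1, by rw [← Equiv.Perm.mul_apply, mul_self_zpow]⟩

theorem IsPrimitiveRoot.range_zpow_eq_nthRootsFinset {K : Type*} [Field K] {ζ : K} {n : ℕ}
    [NeZero n] (h : IsPrimitiveRoot ζ n) :
    Set.range (ζ ^ · : ℤ → K) = Polynomial.nthRootsFinset n (1 : K) := by
  ext ξ
  rw [Finset.mem_coe, Polynomial.mem_nthRootsFinset (NeZero.pos n)]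
  constructor
  · rintro ⟨k, rfl⟩
    rw [← zpow_natCast, ← zpow_mul, mul_comm, zpow_mul, h.zpow_eq_one, one_zpow]
  · intro hξ
    obtain ⟨i, -, rfl⟩ := h.eq_pow_of_pow_eq_one hξ
    exact ⟨i, zpow_natCast ζ i⟩

theorem IsPrimitiveRoot.ncard_range_zpow {K : Type*} [Field K] {ζ : K} {n : ℕ} [NeZero n]
    (h : IsPrimitiveRoot ζ n) : (Set.range (ζ ^ · : ℤ → K)).ncard = n := by
  rw [h.range_zpow_eq_nthRootsFinset, Set.ncard_coe_finset, h.card_nthRootsFinset]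

section Rotation

open Complex

theorem rotZ_apply (θ : ℝ) (x : ℂ × ℝ) : rotZ θ x = (exp (θ * I) * x.1, x.2) := rfl

theorem rotZ_inv_apply (θ : ℝ) (x : ℂ × ℝ) :
    (rotZ θ)⁻¹ x = ((exp (θ * I))⁻¹ * x.1, x.2) := rfl

theorem rotZ_zpow_apply (θ : ℝ) (k : ℤ) (x : ℂ × ℝ) :
    (rotZ θ ^ k) x = (exp (θ * I) ^ k * x.1, x.2) := by
  have hc := exp_ne_zero (θ * I)
  induction k using Int.induction_on generalizing x with
  | zero => simp
  | succ n ih =>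
    rw [zpow_add_one, Equiv.Perm.mul_apply, rotZ_apply, ih, zpow_add_one₀ hc]
    exact Prod.ext (by dsimp only; ring) rfl
  | pred n ih =>
    rw [zpow_sub_one, Equiv.Perm.mul_apply, rotZ_inv_apply, ih, zpow_sub_one₀ hc]
    exact Prod.ext (by dsimp only; ring) rfl

theorem rotZ_zpow_apply_snd (θ : ℝ) (k : ℤ) (x : ℂ × ℝ) : ((rotZ θ ^ k) x).2 = x.2 := by
  rw [rotZ_zpow_apply]

theorem norm_rotZ_zpow_apply_fst (θ : ℝ) (k : ℤ) (x : ℂ × ℝ) :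
    ‖((rotZ θ ^ k) x).1‖ = ‖x.1‖ := by
  rw [rotZ_zpow_apply, norm_mul, norm_zpow, norm_exp_ofReal_mul_I, one_zpow, one_mul]

theorem ncard_rotZ_orbit {θ : ℝ} {n : ℕ} [NeZero n] (hθ : IsPrimitiveRoot (exp (θ * I)) n)
    {x : ℂ × ℝ} (hx : x.1 ≠ 0) : {y | ∃ k : ℤ, y = (rotZ θ ^ k) x}.ncard = n := by
  have horbit : {y | ∃ k : ℤ, y = (rotZ θ ^ k) x} =
      (fun w => (w * x.1, x.2)) '' Set.range (exp (θ * I) ^ · : ℤ → ℂ) := by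
    ext y
    simp [rotZ_zpow_apply, eq_comm]
  have hinj : Function.Injective (fun w : ℂ => (w * x.1, x.2)) :=
    fun a b hab => mul_right_cancel₀ hx (congrArg Prod.fst hab)
  rw [horbit, Set.ncard_image_of_injective _ hinj, hθ.ncard_range_zpow]

end Rotation

section LensRel

variable {p q : ℤ} {a b : ℂ × ℝ}

theorem lensRel.snd_eq_neg (h : lensRel p q a b) : b.2 = -a.2 := by
  rw [h.2.2]
  rfl

theorem lensRel.eq_rotZ_of_snd_eq_zero (h : lensRel p q a b) (ha : a.2 = 0) :
    b = rotZ (2 * Real.pi * (q : ℝ) / (p : ℝ)) a := by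
  rw [h.2.2]
  exact Prod.ext rfl (by simp [reflZ, rotZ_apply, ha])

theorem lensRel_rotZ_of_snd_eq_zero (ha : ‖a.1‖ ^ 2 + a.2 ^ 2 = 1) (ha₃ : a.2 = 0) :
    lensRel p q a (rotZ (2 * Real.pi * (q : ℝ) / (p : ℝ)) a) :=
  ⟨ha, ha₃.ge, Prod.ext rfl (by simp [reflZ, rotZ_apply, ha₃])⟩

end LensRel

theorem setOf_eqvGen_lensRel_eq_orbit (p q : ℤ) {x : ℂ × ℝ} (hx : ‖x.1‖ ^ 2 + x.2 ^ 2 = 1)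
    (hx₃ : x.2 = 0) :
    {y | Relation.EqvGen (lensRel p q) x y} =
      {y | ∃ k : ℤ, y = (rotZ (2 * Real.pi * (q : ℝ) / (p : ℝ)) ^ k) x} := by
  set σ := rotZ (2 * Real.pi * (q : ℝ) / (p : ℝ))
  set O := {y | ∃ k : ℤ, y = (σ ^ k) x}
  have hO : ∀ y ∈ O, y.2 = 0 := by
    rintro _ ⟨k, rfl⟩
    rw [rotZ_zpow_apply_snd, hx₃]
  have hstep : ∀ k : ℤ, lensRel p q ((σ ^ k) x) ((σ ^ (k + 1)) x) := by
    intro k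
    rw [← mul_self_zpow, Equiv.Perm.mul_apply]
    apply lensRel_rotZ_of_snd_eq_zero
    · rw [norm_rotZ_zpow_apply_fst, rotZ_zpow_apply_snd, hx]
    · rw [rotZ_zpow_apply_snd, hx₃]
  have hclosed : ∀ a b, lensRel p q a b → (a ∈ O ↔ b ∈ O) := by
    intro a b hab
    rcases eq_or_ne a.2 0 with ha | ha
    · rw [hab.eq_rotZ_of_snd_eq_zero ha]
      exact (σ.exists_apply_eq_zpow_apply_iff x a).symm
    · have hb : b.2 ≠ 0 := by
        rw [hab.snd_eq_neg]
        exact neg_ne_zero.mpr ha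
      exact iff_of_false (mt (hO a) ha) (mt (hO b) hb)
  ext y
  refine ⟨fun h => (h.mem_iff_mem hclosed).mp ⟨0, rfl⟩, ?_⟩
  rintro ⟨k, rfl⟩
  simpa using Relation.eqvGen_of_rel_succ (f := fun k : ℤ => (σ ^ k) x) hstep 0 k

/-- On the equator, each equivalence class of the lens space identification is the
rotation orbit `{g^k(x) : k ∈ ℤ}`, and it contains exactly `p` points. -/
theorem stmt0 (p q : ℤ) (h0 : 0 ≤ q) (h1 : q < p) (hpq : Int.gcd p q = 1)
    (x : ℂ × ℝ) (hx : ‖x.1‖ ^ 2 + x.2 ^ 2 = 1) (hx3 : x.2 = 0) :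
    {y | Relation.EqvGen (lensRel p q) x y} =
      {y | ∃ k : ℤ, y = (rotZ (2 * Real.pi * (q : ℝ) / (p : ℝ)) ^ k) x} ∧
    ({y | Relation.EqvGen (lensRel p q) x y}.ncard : ℤ) = p := by
  have hp : 0 < p := h0.trans_lt h1
  have hx₁ : x.1 ≠ 0 := by
    rintro h
    simp [h, hx3] at hx
  have hclass := setOf_eqvGen_lensRel_eq_orbit p q hx hx3
  refine ⟨hclass, ?_⟩
  lift p to ℕ using hp.le
  lift q to ℕ using h0
  have : NeZero p := ⟨by omega⟩
  have hζ : IsPrimitiveRoot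
      (Complex.exp ((2 * Real.pi * ((q : ℤ) : ℝ) / ((p : ℤ) : ℝ) : ℝ) * Complex.I)) p := by
    convert Complex.isPrimitiveRoot_exp_of_coprime q p (NeZero.ne p) (Nat.coprime_comm.mp hpq)
      using 2
    push_cast
    ring
  rw [hclass, ncard_rotZ_orbit hζ hx₁]
end

section
/- Let g : ℝ³ → ℝ³ be the rotation by angle 2πq/p about the x₃-axis and f : ℝ³ → ℝ³ the reflection (x₁,x₂,x₃) ↦ (x₁,x₂,−x₃), where p, q are integers with 0 ≤ q < p and gcd(p,q) = 1. Let ∼ be the equivalence relation on the unit sphere S² = {x ∈ ℝ³ : ‖x‖ = 1} generated by the pairs x ∼ f(g(x)) for all x ∈ S² with x₃ ≥ 0. Then for every x ∈ S² with x₃ > 0 and x ≠ (0,0,1), the equivalence class of x is exactly the two-element set {x, f(g(x))}, and the class of the north pole N = (0,0,1) is {N, S} where S = (0,0,−1). -/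
/-!
The class of `x` contains `{x, f(g(x))}`, and this pair is closed under the generating
relation in both directions: `f ∘ g` is injective and reverses the sign of `x₃`, so
`f(g(x))` (with `x₃ < 0`) is not in the closed upper hemisphere, and `x` (with `x₃ > 0`)
is the image of no point of it other than itself. The north pole is the case `x = N`,
for which `f(g(N)) = S`.
-/

namespace Relation.EqvGen

variable {α : Type*} {r : α → α → Prop}

theorem mem_of_forall_rel {S : Set α} (hfwd : ∀ a ∈ S, ∀ b, r a b → b ∈ S)
    (hbwd : ∀ b ∈ S, ∀ a, r a b → a ∈ S) {a b : α} (h : EqvGen r a b) :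
    a ∈ S → b ∈ S := by
  have hmono : EqvGen (fun x y => x ∈ S ↔ y ∈ S) a b :=
    h.mono fun x y hxy => ⟨fun hx => hfwd x hx y hxy, fun hy => hbwd y hy x hxy⟩
  exact ((Equivalence.eqvGen_iff (r := fun x y : α => x ∈ S ↔ y ∈ S)
    ⟨fun _ => Iff.rfl, Iff.symm, Iff.trans⟩).mp hmono).mp

theorem setOf_graph_eq_pair {U : Set α} {φ : α → α} (hφ : Set.InjOn φ U) {a : α}
    (ha : a ∈ U) (hφa : φ a ∉ U) (ha_img : ∀ b ∈ U, φ b = a → b = a) :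
    {b | EqvGen (fun x y => x ∈ U ∧ y = φ x) a b} = {a, φ a} := by
  ext b
  refine ⟨fun hb => mem_of_forall_rel ?_ ?_ hb (Set.mem_insert a _), ?_⟩
  · rintro c (rfl | rfl) d ⟨hc, rfl⟩
    · exact Set.mem_insert_of_mem _ rfl
    · exact absurd hc hφa
  · rintro c (rfl | rfl) d ⟨hd, hb⟩
    · exact Or.inl (ha_img d hd hb.symm)
    · exact Or.inl (hφ hd ha hb.symm)
  · rintro (rfl | rfl)
    · exact EqvGen.refl _
    · exact EqvGen.rel _ _ ⟨ha, rfl⟩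

end Relation.EqvGen

theorem reflZ_injective : Function.Injective reflZ := fun x y h => by
  simpa [reflZ, Prod.ext_iff] using h

theorem reflZ_rotZ_snd (θ : ℝ) (x : ℂ × ℝ) : (reflZ (rotZ θ x)).2 = -x.2 := rfl

theorem reflZ_rotZ_north (θ : ℝ) : reflZ (rotZ θ ((0 : ℂ), (1 : ℝ))) = ((0 : ℂ), (-1 : ℝ)) := by
  simp [reflZ, rotZ]

theorem lensRel_eq_graph (p q : ℤ) :
    lensRel p q = fun x y => x ∈ {x : ℂ × ℝ | ‖x.1‖ ^ 2 + x.2 ^ 2 = 1 ∧ 0 ≤ x.2} ∧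
      y = reflZ (rotZ (2 * Real.pi * (q : ℝ) / (p : ℝ)) x) := by
  ext x y
  exact and_assoc.symm

theorem setOf_eqvGen_lensRel_eq_pair (p q : ℤ) {x : ℂ × ℝ} (hx : ‖x.1‖ ^ 2 + x.2 ^ 2 = 1)
    (hx₃ : 0 < x.2) :
    {y | Relation.EqvGen (lensRel p q) x y} =
      {x, reflZ (rotZ (2 * Real.pi * (q : ℝ) / (p : ℝ)) x)} := by
  set θ := 2 * Real.pi * (q : ℝ) / (p : ℝ)
  rw [lensRel_eq_graph]
  refine Relation.EqvGen.setOf_graph_eq_pair (φ := fun x => reflZ (rotZ θ x))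
    (reflZ_injective.comp (rotZ θ).injective).injOn ⟨hx, hx₃.le⟩ ?_ ?_
  · rintro ⟨-, h⟩
    rw [reflZ_rotZ_snd] at h
    linarith
  · rintro b ⟨-, hb⟩ rfl
    rw [reflZ_rotZ_snd] at hx₃
    linarith

theorem stmt1_general (p q : ℤ) :
    (∀ x : ℂ × ℝ, ‖x.1‖ ^ 2 + x.2 ^ 2 = 1 → 0 < x.2 → x ≠ ((0 : ℂ), (1 : ℝ)) →
      {y | Relation.EqvGen (lensRel p q) x y} =
        {x, reflZ (rotZ (2 * Real.pi * (q : ℝ) / (p : ℝ)) x)}) ∧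
    {y | Relation.EqvGen (lensRel p q) ((0 : ℂ), (1 : ℝ)) y} =
      {((0 : ℂ), (1 : ℝ)), ((0 : ℂ), (-1 : ℝ))} := by
  refine ⟨fun x hx hx₃ _ => setOf_eqvGen_lensRel_eq_pair p q hx hx₃, ?_⟩
  rw [setOf_eqvGen_lensRel_eq_pair p q (by simp) zero_lt_one, reflZ_rotZ_north]

/-- For a point `x` of the open upper hemisphere other than the north pole, the
equivalence class of the lens space identification is exactly `{x, f(g(x))}`;
the class of the north pole `N = (0,0,1)` is `{N, S}` with `S = (0,0,-1)`. -/
theorem stmt1 (p q : ℤ) (h0 : 0 ≤ q) (h1 : q < p) (hpq : Int.gcd p q = 1) :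
    (∀ x : ℂ × ℝ, ‖x.1‖ ^ 2 + x.2 ^ 2 = 1 → 0 < x.2 → x ≠ ((0 : ℂ), (1 : ℝ)) →
      {y | Relation.EqvGen (lensRel p q) x y} =
        {x, reflZ (rotZ (2 * Real.pi * (q : ℝ) / (p : ℝ)) x)}) ∧
    {y | Relation.EqvGen (lensRel p q) ((0 : ℂ), (1 : ℝ)) y} =
      {((0 : ℂ), (1 : ℝ)), ((0 : ℂ), (-1 : ℝ))} :=
  stmt1_general p q
end
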